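/- Let f : R^m × R^n → R satisfy 0 ≤ f(W, x) ≤ 1 for all W, x, and define for σ > 0 the smoothed family ĝ(W, x) = (2πσ²)^{-m/2} ∫_{R^m} f(W+Δ, x) e^{-‖Δ‖²/(2σ²)} dΔ (assuming measurability in Δ for each (W,x)). Then sup_{x ∈ R^n} |ĝ(W₁, x) − ĝ(W₂, x)| ≤ ‖W₁ − W₂‖₂/(√(2π)σ) for all W₁, W₂ ∈ R^m; i.e., the Lipschitz constant in W is uniform in x. -/

import Mathlib

open MeasureTheory Real



lemma oneDim (b a : ℝ) (hb : 0 < b) (ha : 0 ≤ a) :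
    ∫ t : ℝ, Set.indicator (Set.Ici 0)
      (fun t => rexp (-b * (t - a) ^ 2) - rexp (-b * (t + a) ^ 2)) t ≤ 2 * a := by
  have ih : Integrable (fun t : ℝ => rexp (-b * t ^ 2)) := integrable_exp_neg_mul_sq hb
  have iga : Integrable (fun t : ℝ => rexp (-b * (t - a) ^ 2)) := ih.comp_sub_right a
  have igb : Integrable (fun t : ℝ => rexp (-b * (t + a) ^ 2)) := ih.comp_add_right a
  rw [integral_indicator measurableSet_Ici]
  rw [integral_sub iga.integrableOn igb.integrableOn]
  have h1 : ∫ t in Set.Ici (0:ℝ), rexp (-b * (t - a) ^ 2)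
      = ∫ t in Set.Ici (-a), rexp (-b * t ^ 2) := by
    rw [← integral_indicator measurableSet_Ici, ← integral_indicator measurableSet_Ici]
    rw [← integral_sub_right_eq_self
      (fun t => Set.indicator (Set.Ici (-a)) (fun s => rexp (-b * s ^ 2)) t) a]
    congr 1; funext x
    by_cases hx : 0 ≤ x
    · rw [Set.indicator_of_mem (Set.mem_Ici.mpr hx), Set.indicator_of_mem (Set.mem_Ici.mpr (by linarith))]
    · rw [Set.indicator_of_notMem (fun h => hx (Set.mem_Ici.mp h)),
        Set.indicator_of_notMem (fun h => hx (by have := Set.mem_Ici.mp h; linarith))]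
  have h2 : ∫ t in Set.Ici (0:ℝ), rexp (-b * (t + a) ^ 2)
      = ∫ t in Set.Ici a, rexp (-b * t ^ 2) := by
    rw [← integral_indicator measurableSet_Ici, ← integral_indicator measurableSet_Ici]
    rw [← integral_add_right_eq_self
      (fun t => Set.indicator (Set.Ici a) (fun s => rexp (-b * s ^ 2)) t) a]
    congr 1; funext x
    by_cases hx : 0 ≤ x
    · rw [Set.indicator_of_mem (Set.mem_Ici.mpr hx), Set.indicator_of_mem (Set.mem_Ici.mpr (by linarith))]
    · rw [Set.indicator_of_notMem (fun h => hx (Set.mem_Ici.mp h)),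
        Set.indicator_of_notMem (fun h => hx (by have := Set.mem_Ici.mp h; linarith))]
  rw [h1, h2]
  have hsplit : Set.Ici (-a) = Set.Ico (-a) a ∪ Set.Ici a :=
    (Set.Ico_union_Ici_eq_Ici (by linarith)).symm
  have hdisj : Disjoint (Set.Ico (-a) a) (Set.Ici a) := by
    rw [Set.disjoint_left]; intro x hx hx'; exact absurd hx.2 (not_lt.mpr hx')
  rw [hsplit, setIntegral_union hdisj measurableSet_Ici ih.integrableOn ih.integrableOn]
  have hb2 : ∫ t in Set.Ico (-a) a, rexp (-b * t ^ 2) ≤ ∫ t in Set.Ico (-a) a, (1:ℝ) := by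
    apply setIntegral_mono_on ih.integrableOn (integrableOn_const ?_)
      measurableSet_Ico
    · intro x _
      exact exp_le_one_iff.mpr (by nlinarith)
    · rw [Real.volume_Ico]; exact ENNReal.ofReal_ne_top
  have hc : ∫ t in Set.Ico (-a) a, (1:ℝ) = 2 * a := by
    simp [Real.volume_Ico]
    rw [max_eq_left (by linarith)]; ring
  linarith

local notation "⟪" x ", " y "⟫" => @inner ℝ _ _ x y

set_option maxHeartbeats 2000000 in
theorem key (m : ℕ) (σ : ℝ) (hσ : 0 < σ)
    (F : EuclideanSpace ℝ (Fin m) → ℝ) (hF : Measurable F)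
    (h0 : ∀ y, 0 ≤ F y) (h1 : ∀ y, F y ≤ 1)
    (W₁ W₂ : EuclideanSpace ℝ (Fin m)) :
    (2 * π * σ ^ 2) ^ (-(m : ℝ) / 2) *
      ((∫ Δ : EuclideanSpace ℝ (Fin m), F (W₁ + Δ) * rexp (-‖Δ‖ ^ 2 / (2 * σ ^ 2))) -
       ∫ Δ : EuclideanSpace ℝ (Fin m), F (W₂ + Δ) * rexp (-‖Δ‖ ^ 2 / (2 * σ ^ 2))) ≤
      ‖W₁ - W₂‖ / (Real.sqrt (2 * π) * σ) := by
  classical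
  set b : ℝ := (2 * σ ^ 2)⁻¹ with hbdef
  have hb : 0 < b := by positivity
  set c : ℝ := (2 * π * σ ^ 2) ^ (-(m : ℝ) / 2) with hcdef
  have hc : 0 < c := by
    apply Real.rpow_pos_of_pos; positivity
  set E0 : EuclideanSpace ℝ (Fin m) → ℝ := fun y => rexp (-b * ‖y‖ ^ 2) with hE0def
  have hE : ∀ y : EuclideanSpace ℝ (Fin m), rexp (-‖y‖ ^ 2 / (2 * σ ^ 2)) = E0 y := by
    intro y; simp only [hE0def, hbdef]; ring_nf
  have hE0int : Integrable E0 := by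
    have h := (GaussianFourier.integrable_cexp_neg_mul_sq_norm_add
      (V := EuclideanSpace ℝ (Fin m)) (b := (b : ℂ)) (by simpa using hb) 0 0).norm
    refine h.congr (Filter.Eventually.of_forall fun v => ?_)
    simp only [Complex.norm_exp, hE0def]
    norm_num
    norm_cast
    exact Or.inl rfl
  -- reduce to the nondegenerate case
  rcases eq_or_ne W₁ W₂ with rfl | hne
  · simp
  set v : EuclideanSpace ℝ (Fin m) := W₁ - W₂ with hvdef
  have hv : v ≠ 0 := sub_ne_zero.mpr hne
  have hvn : 0 < ‖v‖ := norm_pos_iff.mpr hv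
  have hm : 0 < m := by
    by_contra h
    have : m = 0 := by omega
    subst this
    exact hne (Subsingleton.elim _ _)
  -- Step A: translation
  have stepA : ∀ W : EuclideanSpace ℝ (Fin m),
      (∫ Δ, F (W + Δ) * rexp (-‖Δ‖ ^ 2 / (2 * σ ^ 2))) = ∫ Δ, F Δ * E0 (Δ - W) := by
    intro W
    have : (∫ Δ, F (W + Δ) * rexp (-‖Δ‖ ^ 2 / (2 * σ ^ 2)))
        = ∫ Δ, (fun y => F y * E0 (y - W)) (W + Δ) := by
      congr 1; funext Δ
      beta_reduce
      rw [hE, add_sub_cancel_left]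
    rw [this, integral_add_left_eq_self (fun y => F y * E0 (y - W)) W]
  -- integrability
  have hE0shift : ∀ W : EuclideanSpace ℝ (Fin m), Integrable (fun Δ => E0 (Δ - W)) :=
    fun W => hE0int.comp_sub_right W
  have hFE : ∀ W : EuclideanSpace ℝ (Fin m), Integrable (fun Δ => F Δ * E0 (Δ - W)) := by
    intro W
    exact (hE0shift W).bdd_mul (c := 1) hF.aestronglyMeasurable
      (Filter.Eventually.of_forall fun y => by rw [Real.norm_eq_abs, abs_le]; exact ⟨by linarith [h0 y], h1 y⟩)
  -- the half space
  set z : EuclideanSpace ℝ (Fin m) := (2⁻¹ : ℝ) • (W₁ + W₂) with hzdef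
  set H : Set (EuclideanSpace ℝ (Fin m)) := {Δ | 0 ≤ ⟪v, Δ - z⟫} with hHdef
  have hHmeas : MeasurableSet H := by
    have hcont : Continuous fun Δ : EuclideanSpace ℝ (Fin m) => ⟪v, Δ - z⟫ :=
      continuous_const.inner (continuous_id.sub continuous_const)
    exact measurableSet_le measurable_const hcont.measurable
  have hdiff : ∀ Δ : EuclideanSpace ℝ (Fin m),
      ‖Δ - W₂‖ ^ 2 - ‖Δ - W₁‖ ^ 2 = 2 * ⟪v, Δ - z⟫ := by
    intro Δ
    rw [← real_inner_self_eq_norm_sq, ← real_inner_self_eq_norm_sq]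
    simp only [hvdef, hzdef, inner_sub_left, inner_sub_right, inner_add_left, inner_add_right,
      real_inner_smul_left, real_inner_smul_right]
    rw [real_inner_comm W₂ Δ, real_inner_comm W₁ Δ, real_inner_comm W₂ W₁]
    ring
  have hmono : ∀ Δ, Δ ∈ H → E0 (Δ - W₂) ≤ E0 (Δ - W₁) := by
    intro Δ hΔ
    simp only [hE0def]
    apply Real.exp_le_exp.mpr
    have h2 := hdiff Δ
    have h3 : (0:ℝ) ≤ ⟪v, Δ - z⟫ := hΔ
    nlinarith
  have stepD : ∀ Δ, F Δ * (E0 (Δ - W₁) - E0 (Δ - W₂)) ≤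
      Set.indicator H (fun Δ => E0 (Δ - W₁) - E0 (Δ - W₂)) Δ := by
    intro Δ
    by_cases hΔ : Δ ∈ H
    · rw [Set.indicator_of_mem hΔ]
      have hd : 0 ≤ E0 (Δ - W₁) - E0 (Δ - W₂) := by linarith [hmono Δ hΔ]
      nlinarith [h0 Δ, h1 Δ]
    · rw [Set.indicator_of_notMem hΔ]
      have h3 : ⟪v, Δ - z⟫ < 0 := lt_of_not_ge hΔ
      have h2 := hdiff Δ
      have hd : E0 (Δ - W₁) - E0 (Δ - W₂) ≤ 0 := by
        simp only [hE0def, sub_nonpos]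
        apply Real.exp_le_exp.mpr
        nlinarith
      nlinarith [h0 Δ, h1 Δ]
  have hIind : Integrable (Set.indicator H (fun Δ => E0 (Δ - W₁) - E0 (Δ - W₂))) :=
    ((hE0shift W₁).sub (hE0shift W₂)).indicator hHmeas
  have stepE : (∫ Δ, F Δ * E0 (Δ - W₁)) - (∫ Δ, F Δ * E0 (Δ - W₂)) ≤
      ∫ Δ, Set.indicator H (fun Δ => E0 (Δ - W₁) - E0 (Δ - W₂)) Δ := by
    rw [← integral_sub (hFE W₁) (hFE W₂)]
    apply integral_mono ((hFE W₁).sub (hFE W₂)) hIind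
    intro Δ
    have := stepD Δ
    simpa [mul_sub] using this
  -- translate by the midpoint
  set w : EuclideanSpace ℝ (Fin m) := (2⁻¹ : ℝ) • v with hwdef
  have hzw1 : z + w = W₁ := by
    simp only [hzdef, hwdef, hvdef]
    module
  have hzw2 : z - w = W₂ := by
    simp only [hzdef, hwdef, hvdef]
    module
  set ψ : EuclideanSpace ℝ (Fin m) → ℝ :=
    Set.indicator {y : EuclideanSpace ℝ (Fin m) | 0 ≤ ⟪v, y⟫}
      (fun y => E0 (y - w) - E0 (y + w)) with hψdef
  have stepF : (∫ Δ, Set.indicator H (fun Δ => E0 (Δ - W₁) - E0 (Δ - W₂)) Δ) = ∫ y, ψ y := by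
    rw [← integral_sub_right_eq_self ψ z]
    congr 1; funext Δ
    beta_reduce
    by_cases hΔ : Δ ∈ H
    · rw [Set.indicator_of_mem hΔ, hψdef,
        Set.indicator_of_mem (show Δ - z ∈ {y : EuclideanSpace ℝ (Fin m) | 0 ≤ ⟪v, y⟫} from hΔ)]
      have e1 : Δ - z - w = Δ - W₁ := by rw [← hzw1]; abel
      have e2 : Δ - z + w = Δ - W₂ := by rw [← hzw2]; abel
      rw [e1, e2]
    · rw [Set.indicator_of_notMem hΔ, hψdef,
        Set.indicator_of_notMem
          (show Δ - z ∉ {y : EuclideanSpace ℝ (Fin m) | 0 ≤ ⟪v, y⟫} from hΔ)]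
  -- rotation
  set i0 : Fin m := ⟨0, hm⟩ with hi0def
  set u : EuclideanSpace ℝ (Fin m) := ‖v‖⁻¹ • v with hudef
  have hu : ‖u‖ = 1 := by
    rw [hudef, norm_smul, norm_inv, norm_norm, inv_mul_cancel₀ (ne_of_gt hvn)]
  have horth : Orthonormal ℝ (Set.restrict {i0} fun _ : Fin m => u) := by
    constructor
    · intro i; exact hu
    · intro i j hij
      exact ((hij (Subtype.ext ((Set.mem_singleton_iff.mp i.2).trans
        (Set.mem_singleton_iff.mp j.2).symm))).elim)
  obtain ⟨B, hB⟩ := horth.exists_orthonormalBasis_extension_of_card_eq (by simp)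
  have hB0 : B i0 = u := hB i0 rfl
  set T := B.repr with hTdef
  have hTu : T u = EuclideanSpace.single i0 1 := by
    rw [← hB0]; exact B.repr_self i0
  set a : ℝ := 2⁻¹ * ‖v‖ with hadef
  have ha : 0 ≤ a := by positivity
  set s : EuclideanSpace ℝ (Fin m) := EuclideanSpace.single i0 a with hsdef
  have hTw : T w = s := by
    have hwau : w = a • u := by
      rw [hwdef, hudef, hadef, smul_smul]
      congr 1
      rw [mul_assoc, mul_inv_cancel₀ (ne_of_gt hvn), mul_one]
    rw [hwau, _root_.map_smul, hTu, hsdef]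
    ext j
    simp only [PiLp.smul_apply, EuclideanSpace.single_apply, smul_eq_mul]
    split <;> simp
  have hinner : ∀ y : EuclideanSpace ℝ (Fin m), ⟪v, T.symm y⟫ = ‖v‖ * y i0 := by
    intro y
    have hvu : v = ‖v‖ • u := by
      rw [hudef, smul_smul, mul_inv_cancel₀ (ne_of_gt hvn), one_smul]
    have h5 : ⟪v, T.symm y⟫ = ‖v‖ * ⟪u, T.symm y⟫ := by
      conv_lhs => rw [hvu]
      rw [real_inner_smul_left]
    have h6 : ⟪u, T.symm y⟫ = y i0 :=
      calc ⟪u, T.symm y⟫ = ⟪T u, T (T.symm y)⟫ := (T.inner_map_map u (T.symm y)).symm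
        _ = ⟪T u, y⟫ := by rw [T.apply_symm_apply]
        _ = y i0 := by rw [hTu, EuclideanSpace.inner_single_left]; simp
    rw [h5, h6]
  have stepG : (∫ y, ψ y) = ∫ y : EuclideanSpace ℝ (Fin m),
      Set.indicator {x : EuclideanSpace ℝ (Fin m) | 0 ≤ x i0}
        (fun x => rexp (-b * ‖x - s‖ ^ 2) - rexp (-b * ‖x + s‖ ^ 2)) y := by
    rw [← B.measurePreserving_repr_symm.integral_comp
      (T.symm.toHomeomorph.measurableEmbedding) ψ]
    congr 1; funext y
    rw [hψdef]
    by_cases hy : 0 ≤ y i0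
    · rw [Set.indicator_of_mem,
        Set.indicator_of_mem (show y ∈ {x : EuclideanSpace ℝ (Fin m) | 0 ≤ x i0} from hy)]
      · have e1 : ‖T.symm y - w‖ = ‖y - s‖ := by
          rw [← T.norm_map (T.symm y - w), map_sub, T.apply_symm_apply, hTw]
        have e2 : ‖T.symm y + w‖ = ‖y + s‖ := by
          rw [← T.norm_map (T.symm y + w), map_add, T.apply_symm_apply, hTw]
        simp only [hE0def, ← hTdef, e1, e2]
      · show 0 ≤ ⟪v, T.symm y⟫
        rw [hinner y]; positivity
    · rw [Set.indicator_of_notMem,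
        Set.indicator_of_notMem (show y ∉ {x : EuclideanSpace ℝ (Fin m) | 0 ≤ x i0} from hy)]
      show ¬ 0 ≤ ⟪v, T.symm y⟫
      rw [hinner y]
      intro hcon
      exact hy (show (0:ℝ) ≤ y i0 from (mul_nonneg_iff_of_pos_left hvn).mp hcon)
  -- transfer to the product space
  have hsi0 : s i0 = a := by simp [hsdef, EuclideanSpace.single_apply]
  have hsi : ∀ j, j ≠ i0 → s j = 0 := by
    intro j hj; simp [hsdef, EuclideanSpace.single_apply, hj]
  set G : Fin m → ℝ → ℝ := fun i t =>
    if i = i0 then Set.indicator (Set.Ici 0)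
      (fun t => rexp (-b * (t - a) ^ 2) - rexp (-b * (t + a) ^ 2)) t
    else rexp (-b * t ^ 2) with hGdef
  have stepH : (∫ y : EuclideanSpace ℝ (Fin m),
      Set.indicator {x : EuclideanSpace ℝ (Fin m) | 0 ≤ x i0}
        (fun x => rexp (-b * ‖x - s‖ ^ 2) - rexp (-b * ‖x + s‖ ^ 2)) y)
      = ∫ x : Fin m → ℝ, ∏ i, G i (x i) := by
    rw [← ((EuclideanSpace.volume_preserving_symm_measurableEquiv_toLp (Fin m)).symm _).integral_comp
      (MeasurableEquiv.measurableEmbedding _)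
      (Set.indicator {x : EuclideanSpace ℝ (Fin m) | 0 ≤ x i0}
        (fun x => rexp (-b * ‖x - s‖ ^ 2) - rexp (-b * ‖x + s‖ ^ 2)))]
    congr 1; funext x
    beta_reduce
    set y := (MeasurableEquiv.toLp 2 (Fin m → ℝ)).symm.symm x with hydef
    have hyj : ∀ j, y j = x j := fun j => rfl
    have hA : rexp (-b * ‖y - s‖ ^ 2) = ∏ i, rexp (-b * (x i - s i) ^ 2) := by
      rw [EuclideanSpace.norm_eq, Real.sq_sqrt (Finset.sum_nonneg fun i _ => by positivity),
        Finset.mul_sum, Real.exp_sum]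
      apply Finset.prod_congr rfl
      intro i _
      congr 1
      have : (y - s) i = x i - s i := rfl
      rw [Real.norm_eq_abs, sq_abs, this]
    have hB : rexp (-b * ‖y + s‖ ^ 2) = ∏ i, rexp (-b * (x i + s i) ^ 2) := by
      rw [EuclideanSpace.norm_eq, Real.sq_sqrt (Finset.sum_nonneg fun i _ => by positivity),
        Finset.mul_sum, Real.exp_sum]
      apply Finset.prod_congr rfl
      intro i _
      congr 1
      have : (y + s) i = x i + s i := rfl
      rw [Real.norm_eq_abs, sq_abs, this]
    have hsplitA : ∏ i, rexp (-b * (x i - s i) ^ 2)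
        = rexp (-b * (x i0 - a) ^ 2) * ∏ i ∈ Finset.univ.erase i0, rexp (-b * (x i) ^ 2) := by
      rw [← Finset.mul_prod_erase Finset.univ _ (Finset.mem_univ i0), hsi0]
      congr 1
      apply Finset.prod_congr rfl
      intro i hi
      rw [hsi i (Finset.ne_of_mem_erase hi), sub_zero]
    have hsplitB : ∏ i, rexp (-b * (x i + s i) ^ 2)
        = rexp (-b * (x i0 + a) ^ 2) * ∏ i ∈ Finset.univ.erase i0, rexp (-b * (x i) ^ 2) := by
      rw [← Finset.mul_prod_erase Finset.univ _ (Finset.mem_univ i0), hsi0]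
      congr 1
      apply Finset.prod_congr rfl
      intro i hi
      rw [hsi i (Finset.ne_of_mem_erase hi), add_zero]
    have hsplitG : ∏ i, G i (x i)
        = G i0 (x i0) * ∏ i ∈ Finset.univ.erase i0, rexp (-b * (x i) ^ 2) := by
      rw [← Finset.mul_prod_erase Finset.univ _ (Finset.mem_univ i0)]
      congr 1
      apply Finset.prod_congr rfl
      intro i hi
      rw [hGdef]
      beta_reduce
      rw [if_neg (Finset.ne_of_mem_erase hi)]
    rw [hsplitG]
    by_cases hx0 : 0 ≤ x i0
    · rw [Set.indicator_of_mem (show y ∈ {x : EuclideanSpace ℝ (Fin m) | 0 ≤ x i0} from hx0)]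
      rw [hA, hB, hsplitA, hsplitB, hGdef]
      beta_reduce
      rw [if_pos rfl, Set.indicator_of_mem (Set.mem_Ici.mpr hx0)]
      ring
    · rw [Set.indicator_of_notMem (show y ∉ {x : EuclideanSpace ℝ (Fin m) | 0 ≤ x i0} from hx0),
        hGdef]
      beta_reduce
      rw [if_pos rfl, Set.indicator_of_notMem (fun hc => hx0 (Set.mem_Ici.mp hc))]
      ring
  -- compute the product of integrals
  have stepI : (∫ x : Fin m → ℝ, ∏ i, G i (x i)) = ∏ i, ∫ t, G i t :=
    MeasureTheory.integral_fintype_prod_eq_prod G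
  have hGi0 : (∫ t, G i0 t) ≤ ‖v‖ := by
    have : (∫ t, G i0 t) = ∫ t, Set.indicator (Set.Ici 0)
        (fun t => rexp (-b * (t - a) ^ 2) - rexp (-b * (t + a) ^ 2)) t := by
      congr 1
    rw [this]
    have h2a : 2 * a = ‖v‖ := by rw [hadef]; ring
    rw [← h2a]
    exact oneDim b a hb ha
  have hGother : ∀ i, i ≠ i0 → (∫ t, G i t) = Real.sqrt (π / b) := by
    intro i hi
    have : (∫ t, G i t) = ∫ t, rexp (-b * t ^ 2) := by
      congr 1; funext t; rw [hGdef]; try (beta_reduce; rw [if_neg hi])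
    rw [this, integral_gaussian]
  have hprodsplit : ∏ i, (∫ t, G i t)
      = (∫ t, G i0 t) * Real.sqrt (π / b) ^ (m - 1) := by
    rw [← Finset.mul_prod_erase Finset.univ _ (Finset.mem_univ i0)]
    congr 1
    rw [Finset.prod_congr rfl (fun i hi => hGother i (Finset.ne_of_mem_erase hi)),
      Finset.prod_const, Finset.card_erase_of_mem (Finset.mem_univ i0), Finset.card_univ,
      Fintype.card_fin]
  -- the constant computation
  have hq : Real.sqrt (π / b) = Real.sqrt (2 * π * σ ^ 2) := by
    congr 1
    rw [hbdef]
    field_simp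
  have hconst : c * Real.sqrt (π / b) ^ (m - 1) = (Real.sqrt (2 * π) * σ)⁻¹ := by
    rw [hq]
    have hx : (0:ℝ) < 2 * π * σ ^ 2 := by positivity
    rw [Real.sqrt_eq_rpow, ← Real.rpow_natCast ((2 * π * σ ^ 2) ^ ((1:ℝ)/2)) (m - 1),
      ← Real.rpow_mul hx.le, hcdef, ← Real.rpow_add hx]
    have hcast : ((m - 1 : ℕ) : ℝ) = (m : ℝ) - 1 := by
      rw [Nat.cast_sub hm]
      norm_num
    rw [hcast]
    have hexp : -(m : ℝ) / 2 + 1 / 2 * ((m:ℝ) - 1) = -(1/2 : ℝ) := by ring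
    rw [hexp]
    rw [Real.rpow_neg hx.le, ← Real.sqrt_eq_rpow]
    congr 1
    rw [show (2 : ℝ) * π * σ ^ 2 = (2 * π) * σ ^ 2 by ring,
      Real.sqrt_mul (by positivity), Real.sqrt_sq hσ.le]
  -- assemble
  have hqnn : 0 ≤ Real.sqrt (π / b) ^ (m - 1) := by positivity
  calc c * ((∫ Δ, F (W₁ + Δ) * rexp (-‖Δ‖ ^ 2 / (2 * σ ^ 2))) -
       ∫ Δ, F (W₂ + Δ) * rexp (-‖Δ‖ ^ 2 / (2 * σ ^ 2)))
      = c * ((∫ Δ, F Δ * E0 (Δ - W₁)) - ∫ Δ, F Δ * E0 (Δ - W₂)) := by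
        rw [stepA W₁, stepA W₂]
    _ ≤ c * ((∫ t, G i0 t) * Real.sqrt (π / b) ^ (m - 1)) := by
        apply mul_le_mul_of_nonneg_left _ hc.le
        calc (∫ Δ, F Δ * E0 (Δ - W₁)) - ∫ Δ, F Δ * E0 (Δ - W₂)
            ≤ ∫ Δ, Set.indicator H (fun Δ => E0 (Δ - W₁) - E0 (Δ - W₂)) Δ := stepE
          _ = (∫ t, G i0 t) * Real.sqrt (π / b) ^ (m - 1) := by
              rw [stepF, stepG, stepH, stepI, hprodsplit]
    _ ≤ c * (‖v‖ * Real.sqrt (π / b) ^ (m - 1)) := by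
        apply mul_le_mul_of_nonneg_left _ hc.le
        exact mul_le_mul_of_nonneg_right hGi0 hqnn
    _ = ‖v‖ * (c * Real.sqrt (π / b) ^ (m - 1)) := by ring
    _ = ‖W₁ - W₂‖ / (Real.sqrt (2 * π) * σ) := by
        rw [hconst, hvdef, div_eq_mul_inv]

theorem input_agnostic_lipschitz (m n : ℕ) (σ : ℝ) (hσ : 0 < σ)
    (f : EuclideanSpace ℝ (Fin m) → EuclideanSpace ℝ (Fin n) → ℝ)
    (hf : ∀ x, Measurable (fun W => f W x))
    (hbd : ∀ W x, 0 ≤ f W x ∧ f W x ≤ 1)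
    (g : EuclideanSpace ℝ (Fin m) → EuclideanSpace ℝ (Fin n) → ℝ)
    (hg : ∀ W x, g W x = (2 * Real.pi * σ ^ 2) ^ (-(m : ℝ) / 2) *
      ∫ Δ : EuclideanSpace ℝ (Fin m), f (W + Δ) x * Real.exp (-‖Δ‖ ^ 2 / (2 * σ ^ 2))) :
    ∀ W₁ W₂ : EuclideanSpace ℝ (Fin m), ∀ x : EuclideanSpace ℝ (Fin n),
      |g W₁ x - g W₂ x| ≤ ‖W₁ - W₂‖ / (Real.sqrt (2 * Real.pi) * σ) := by
  intro W₁ W₂ x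
  rw [abs_sub_le_iff]
  constructor
  · rw [hg W₁ x, hg W₂ x, ← mul_sub]
    exact key m σ hσ (fun W => f W x) (hf x) (fun y => (hbd y x).1) (fun y => (hbd y x).2) W₁ W₂
  · rw [hg W₁ x, hg W₂ x, ← mul_sub, show ‖W₁ - W₂‖ = ‖W₂ - W₁‖ from norm_sub_rev _ _]
    exact key m σ hσ (fun W => f W x) (hf x) (fun y => (hbd y x).1) (fun y => (hbd y x).2) W₂ W₁
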